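/- arXiv:2506.02595 — 3 statements merged into one kernel-verified Lean document; each statement's English description precedes it below -/
import Mathlib

section
/- (Interior consistency of the scheme with the regularised equation.) Let d ≥ 1, 0 < λ ≤ Λ, ε > 0, θ ≥ 1. Fix Isaacs data with ellipticity constants (λ,Λ), let F(M) := sup_{α∈𝒜} inf_{β∈ℬ} (−Tr(A_{α,β} M)) be the Isaacs operator and F_h its discretisation. Let φ : ℝᵈ → ℝ be twice continuously differentiable, let f : ℝᵈ → ℝ be continuous, and let x ∈ ℝᵈ. Then for all sequences hₙ → 0⁺, yₙ → x and ξₙ → 0, ε(φ(yₙ) + ξₙ) + F_{hₙ} φ(yₙ) − f(yₙ)/(ε + |D_{hₙ} φ(yₙ)|²)^{θ/2} → ε φ(x) + F(D²φ(x)) − f(x)/(ε + ‖∇φ(x)‖²)^{θ/2} (note that F_{hₙ} and |D_{hₙ} · |² applied to φ + ξₙ coincide with those applied to φ, since both discretisations are invariant under adding constants). -/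
/-
Every difference quotient of the scheme equals a first or second directional derivative of `φ`
at a point within `h` of the base point (mean value theorem; Cauchy's form of it for the
symmetric second difference), so it converges by continuity of `Dφ` and `D²φ`.
`L_h^A u x` is a fixed linear combination `stencil A` of the second differences of `u` along
`eᵢ` and `eᵢ ± eⱼ`, and the same combination of `v ↦ D²φ(x)(v, v)` is `Tr (A D²φ(x))`.
Diagonal dominance and `A ≤ ΛI` put all its coefficients in `[0, Λ]`, so the convergence is
uniform in `(α, β)` and survives `sup inf`. The upwind gradient converges to
`∑ᵢ max(-∂ᵢφ, ∂ᵢφ, 0)² = ‖∇φ‖²`.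
-/

open scoped BigOperators
open MeasureTheory
open scoped Classical

noncomputable section

namespace Paper

/-- `ℝᵈ` with the Euclidean structure. -/
abbrev E (d : ℕ) := EuclideanSpace ℝ (Fin d)

/-- The standard basis vector `eᵢ` of `ℝᵈ`. -/
def e (d : ℕ) (i : Fin d) : E d := EuclideanSpace.single i 1

/-- For a symmetric matrix, the maximum of the absolute values of its eigenvalues. -/
def specNorm {d : ℕ} (M : Matrix (Fin d) (Fin d) ℝ) : ℝ :=
  if h : M.IsHermitian then ⨆ i, |h.eigenvalues i| else 0

/-- `(λ,Λ)`-uniform ellipticity of `F : S(d) → ℝ`. -/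
def UniformlyElliptic (d : ℕ) (lam Lam : ℝ) (F : Matrix (Fin d) (Fin d) ℝ → ℝ) : Prop :=
  ∀ M N : Matrix (Fin d) (Fin d) ℝ, M.IsHermitian → N.PosSemidef →
    lam * specNorm N ≤ F M - F (M + N) ∧ F M - F (M + N) ≤ Lam * specNorm N

/-- The upwind discretisation `|D_h u (x)|²`. -/
def upwindSq (d : ℕ) (h : ℝ) (u : E d → ℝ) (x : E d) : ℝ :=
  (1 / h ^ 2) * ∑ i : Fin d,
    max (max (u x - u (x + h • e d i)) (u x - u (x - h • e d i))) 0 ^ 2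

/-- The monotone discretisation `L_h^A u (x)` of `Tr (A D²u)`. -/
def Lh (d : ℕ) (h : ℝ) (A : Matrix (Fin d) (Fin d) ℝ) (u : E d → ℝ) (x : E d) : ℝ :=
  (∑ i : Fin d, (A i i - ∑ j ∈ Finset.univ.erase i, |A i j|) *
      ((u (x + h • e d i) + u (x - h • e d i) - 2 * u x) / h ^ 2)) +
  ∑ i : Fin d, ∑ j ∈ Finset.univ.filter (fun j => i < j),
    (max (A i j) 0 *
        ((u (x + h • (e d i + e d j)) + u (x - h • (e d i + e d j)) - 2 * u x) / h ^ 2) +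
      max (-A i j) 0 *
        ((u (x + h • (e d i - e d j)) + u (x - h • (e d i - e d j)) - 2 * u x) / h ^ 2))

/-- Diagonal dominance of a matrix. -/
def DiagDominant {d : ℕ} (A : Matrix (Fin d) (Fin d) ℝ) : Prop :=
  ∀ i, ∑ j ∈ Finset.univ.erase i, |A i j| ≤ A i i

/-- Isaacs data with ellipticity constants `(λ, Λ)`: symmetric, diagonally dominant matrices
with `λ I ≤ A_{α,β} ≤ Λ I`. -/
def IsaacsData (d : ℕ) {ιA ιB : Type*} (lam Lam : ℝ)
    (A : ιA → ιB → Matrix (Fin d) (Fin d) ℝ) : Prop :=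
  ∀ a b, (A a b).IsHermitian ∧ DiagDominant (A a b) ∧
    (A a b - lam • (1 : Matrix (Fin d) (Fin d) ℝ)).PosSemidef ∧
    (Lam • (1 : Matrix (Fin d) (Fin d) ℝ) - A a b).PosSemidef

/-- Discretised Isaacs operator. -/
def Fh (d : ℕ) {ιA ιB : Type*} (h : ℝ) (A : ιA → ιB → Matrix (Fin d) (Fin d) ℝ)
    (u : E d → ℝ) (x : E d) : ℝ :=
  ⨆ a : ιA, ⨅ b : ιB, -(Lh d h (A a b) u x)

/-- A finite grid `Ω̄_h = Ω_h ∪ ∂Ω_h` whose interior points have all stencil points in the grid. -/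
structure Grid (d : ℕ) (h : ℝ) where
  interior : Finset (E d)
  boundary : Finset (E d)
  disj : Disjoint interior boundary
  nonempty : (interior ∪ boundary).Nonempty
  stencil_ax : ∀ x ∈ interior, ∀ i : Fin d,
    x + h • e d i ∈ interior ∪ boundary ∧ x - h • e d i ∈ interior ∪ boundary
  stencil_diag : ∀ x ∈ interior, ∀ i j : Fin d, i < j →
    x + h • (e d i + e d j) ∈ interior ∪ boundary ∧
    x - h • (e d i + e d j) ∈ interior ∪ boundary ∧
    x + h • (e d i - e d j) ∈ interior ∪ boundary ∧
    x - h • (e d i - e d j) ∈ interior ∪ boundary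

/-- The finite difference scheme `G_h` for the regularised pure degenerate equation. -/
def scheme (d : ℕ) {ιA ιB : Type*} {h : ℝ} (ε θ : ℝ)
    (A : ιA → ιB → Matrix (Fin d) (Fin d) ℝ) (G : Grid d h)
    (f g : E d → ℝ) (u : E d → ℝ) (x : E d) : ℝ :=
  if x ∈ G.interior then
    ε * u x + Fh d h A u x - f x / (ε + upwindSq d h u x) ^ (θ / 2)
  else u x - g x

/-- The finite difference scheme `G_h` for the regularised free transmission problem. -/
def schemeT (d : ℕ) {ιA ιB : Type*} {h : ℝ} (ε : ℝ) (θe : ℝ → ℝ)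
    (A : ιA → ιB → Matrix (Fin d) (Fin d) ℝ) (G : Grid d h)
    (f g : E d → ℝ) (u : E d → ℝ) (x : E d) : ℝ :=
  if x ∈ G.interior then
    ε * u x + Fh d h A u x - f x / (ε + upwindSq d h u x) ^ (θe (u x) / 2)
  else u x - g x

/-- The properties of the regularised degeneracy exponent `θ_ε` used in the transmission scheme. -/
def ThetaInterp (ε θ₁ θ₂ : ℝ) (θe : ℝ → ℝ) : Prop :=
  Monotone θe ∧ (∀ t, θ₁ ≤ θe t ∧ θe t ≤ θ₂) ∧
    (∀ t, t ≤ -ε → θe t = θ₁) ∧ (∀ t, ε ≤ t → θe t = θ₂)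

/-- The Hessian matrix of `φ : ℝᵈ → ℝ` at `x`. -/
def hessianMatrix (d : ℕ) (φ : E d → ℝ) (x : E d) : Matrix (Fin d) (Fin d) ℝ :=
  Matrix.of fun i j => fderiv ℝ (fun y => fderiv ℝ φ y (e d j)) x (e d i)

/-- The piecewise-linear interpolation `Θ_ε` between the degeneracy rates `θ₁` and `θ₂`. -/
def ThetaStep (θ₁ θ₂ ε t : ℝ) : ℝ :=
  if t ≤ -ε then θ₁
  else if t < ε then (θ₂ - θ₁) / (2 * ε) * t + (θ₁ + θ₂) / 2
  else θ₂

end Paper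

open Filter Topology

section Difference

open Set

variable {F G : Type*} [NormedAddCommGroup F] [NormedSpace ℝ F]
  [NormedAddCommGroup G] [NormedSpace ℝ G]

theorem hasDerivAt_comp_add_smul {g : F → G} (y v : F) {t : ℝ}
    (hg : DifferentiableAt ℝ g (y + t • v)) :
    HasDerivAt (fun t : ℝ => g (y + t • v)) (fderiv ℝ g (y + t • v) v) t :=
  hg.hasFDerivAt.comp_hasDerivAt t
    (((hasDerivAt_id t).smul_const v).const_add y |>.congr_deriv (one_smul ℝ v))

variable {φ : F → ℝ}

theorem exists_mem_Ioo_slope_eq_fderiv (hφ : Differentiable ℝ φ) (y v : F) {h : ℝ}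
    (hh : 0 < h) : ∃ t ∈ Ioo 0 h, (φ (y + h • v) - φ y) / h = fderiv ℝ φ (y + t • v) v := by
  have hline := fun t : ℝ => hasDerivAt_comp_add_smul y v (hφ (y + t • v))
  obtain ⟨t, ht, hslope⟩ := exists_hasDerivAt_eq_slope _ _ hh
    (fun t _ => (hline t).continuousAt.continuousWithinAt) (fun t _ => hline t)
  exact ⟨t, ht, by simpa using hslope.symm⟩

theorem exists_mem_Ioo_secondDiff_eq_fderiv_fderiv (hφ : Differentiable ℝ φ)
    (hφ' : Differentiable ℝ (fderiv ℝ φ)) (y v : F) {h : ℝ} (hh : 0 < h) :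
    ∃ s ∈ Ioo (-h) h, (φ (y + h • v) + φ (y - h • v) - 2 * φ y) / h ^ 2
      = fderiv ℝ (fderiv ℝ φ) (y + s • v) v v := by
  set k : ℝ → ℝ := fun t => fderiv ℝ φ (y + t • v) v
  set D : ℝ → ℝ := fun t => φ (y + t • v) + φ (y + (-t) • v) - 2 * φ y
  have hφline := fun t : ℝ => hasDerivAt_comp_add_smul y v (hφ (y + t • v))
  have hD : ∀ t, HasDerivAt D (k t - k (-t)) t := fun t => by
    have := ((hφline t).add (((hφline (-t)).comp t (hasDerivAt_neg t)))).sub_const (2 * φ y)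
    simpa [D, k, sub_eq_add_neg] using this
  have hk : ∀ t, HasDerivAt k (fderiv ℝ (fderiv ℝ φ) (y + t • v) v v) t := fun t =>
    (ContinuousLinearMap.apply ℝ ℝ v).hasFDerivAt.comp_hasDerivAt t
      (hasDerivAt_comp_add_smul y v (hφ' (y + t • v)))
  have hD0 : D 0 = 0 := by simp only [D, zero_smul, neg_zero, add_zero]; ring
  have hDh : D h = φ (y + h • v) + φ (y - h • v) - 2 * φ y := by
    simp only [D, neg_smul, ← sub_eq_add_neg]
  -- Cauchy's mean value theorem against `t ↦ t ^ 2`, then the mean value theorem for `k`.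
  obtain ⟨c, ⟨hc0, hch⟩, hcauchy⟩ := exists_ratio_hasDerivAt_eq_ratio_slope D _ hh
    (fun t _ => (hD t).continuousAt.continuousWithinAt) (fun t _ => hD t) (fun t => t ^ 2)
    (fun t => 2 * t) (continuous_pow 2).continuousOn
    (fun t _ => by simpa using hasDerivAt_pow 2 t)
  obtain ⟨s, ⟨hsc, hcs⟩, hslope⟩ := exists_hasDerivAt_eq_slope k _ (neg_lt_self hc0)
    (fun t _ => (hk t).continuousAt.continuousWithinAt) (fun t _ => hk t)
  refine ⟨s, ⟨by linarith, by linarith⟩, ?_⟩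
  rw [hslope, ← hDh, div_eq_div_iff (by positivity) (by linarith)]
  rw [hD0] at hcauchy
  linear_combination -hcauchy

theorem tendsto_add_smul_of_abs_le {ι : Type*} {l : Filter ι} {y : ι → F} {x : F} (v : F)
    {h t : ι → ℝ} (hy : Tendsto y l (𝓝 x)) (hh : Tendsto h l (𝓝 0)) (ht : ∀ n, |t n| ≤ h n) :
    Tendsto (fun n => y n + t n • v) l (𝓝 x) := by
  have ht0 : Tendsto t l (𝓝 0) := squeeze_zero_norm ht hh
  simpa using hy.add (ht0.smul_const v)

variable {ι : Type*} {l : Filter ι} {h : ι → ℝ} {y : ι → F} {x : F}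

theorem tendsto_slope_fderiv (hφ : ContDiff ℝ 1 φ) (v : F) (hpos : ∀ n, 0 < h n)
    (hh : Tendsto h l (𝓝 0)) (hy : Tendsto y l (𝓝 x)) :
    Tendsto (fun n => (φ (y n + h n • v) - φ (y n)) / h n) l (𝓝 (fderiv ℝ φ x v)) := by
  choose t ht heq using fun n =>
    exists_mem_Ioo_slope_eq_fderiv (hφ.differentiable one_ne_zero) (y n) v (hpos n)
  have hz := tendsto_add_smul_of_abs_le v hy hh fun n =>
    abs_le.2 ⟨by linarith [(ht n).1, hpos n], (ht n).2.le⟩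
  simp only [heq]
  exact ((hφ.continuous_fderiv one_ne_zero).clm_apply continuous_const).continuousAt.tendsto.comp hz

theorem tendsto_secondDiff_fderiv_fderiv (hφ : ContDiff ℝ 2 φ) (v : F) (hpos : ∀ n, 0 < h n)
    (hh : Tendsto h l (𝓝 0)) (hy : Tendsto y l (𝓝 x)) :
    Tendsto (fun n => (φ (y n + h n • v) + φ (y n - h n • v) - 2 * φ (y n)) / h n ^ 2) l
      (𝓝 (fderiv ℝ (fderiv ℝ φ) x v v)) := by
  have hφ' : ContDiff ℝ 1 (fderiv ℝ φ) := hφ.fderiv_right le_rfl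
  choose s hs heq using fun n => exists_mem_Ioo_secondDiff_eq_fderiv_fderiv
    (hφ.differentiable two_ne_zero) (hφ'.differentiable one_ne_zero) (y n) v (hpos n)
  have hz := tendsto_add_smul_of_abs_le v hy hh fun n => abs_le.2 ⟨(hs n).1.le, (hs n).2.le⟩
  simp only [heq]
  exact (((hφ'.continuous_fderiv one_ne_zero).clm_apply continuous_const).clm_apply
    continuous_const).continuousAt.tendsto.comp hz

end Difference

section IsaacsBound

open Set

variable {α β : Type*}

theorem abs_ciInf_sub_ciInf_le [Nonempty β] {f g : β → ℝ} {c : ℝ} (hg : BddBelow (range g))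
    (hfg : ∀ b, |f b - g b| ≤ c) : |(⨅ b, f b) - ⨅ b, g b| ≤ c := by
  obtain ⟨m, hm⟩ := hg
  have hf : BddBelow (range f) := ⟨m - c, by
    rintro _ ⟨b, rfl⟩; linarith [hm ⟨b, rfl⟩, (abs_le.1 (hfg b)).1]⟩
  have hfg' : ∀ b, -c ≤ f b - g b ∧ f b - g b ≤ c := fun b => abs_le.1 (hfg b)
  have hfg_inf : (⨅ b, f b) - c ≤ ⨅ b, g b :=
    le_ciInf fun b => by linarith [ciInf_le hf b, (hfg' b).2]
  have hgf_inf : (⨅ b, g b) - c ≤ ⨅ b, f b :=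
    le_ciInf fun b => by linarith [ciInf_le ⟨m, hm⟩ b, (hfg' b).1]
  exact abs_le.2 ⟨by linarith, by linarith⟩

theorem abs_ciSup_sub_ciSup_le [Nonempty α] {f g : α → ℝ} {c : ℝ} (hg : BddAbove (range g))
    (hfg : ∀ a, |f a - g a| ≤ c) : |(⨆ a, f a) - ⨆ a, g a| ≤ c := by
  obtain ⟨M, hM⟩ := hg
  have hfg' : ∀ a, -c ≤ f a - g a ∧ f a - g a ≤ c := fun a => abs_le.1 (hfg a)
  have hf : BddAbove (range f) := ⟨M + c, by
    rintro _ ⟨a, rfl⟩; linarith [hM ⟨a, rfl⟩, (hfg' a).2]⟩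
  have hfg_sup : (⨆ a, f a) ≤ (⨆ a, g a) + c :=
    ciSup_le fun a => by linarith [le_ciSup ⟨M, hM⟩ a, (hfg' a).2]
  have hgf_sup : (⨆ a, g a) ≤ (⨆ a, f a) + c :=
    ciSup_le fun a => by linarith [le_ciSup hf a, (hfg' a).1]
  exact abs_le.2 ⟨by linarith, by linarith⟩

theorem tendsto_ciSup_ciInf [Nonempty α] [Nonempty β] {ι : Type*} {l : Filter ι}
    {f : ι → α → β → ℝ} {g : α → β → ℝ} {C : ℝ} {δ : ι → ℝ} (hg : ∀ a b, |g a b| ≤ C)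
    (hδ : Tendsto δ l (𝓝 0)) (hfg : ∀ n a b, |f n a b - g a b| ≤ δ n) :
    Tendsto (fun n => ⨆ a, ⨅ b, f n a b) l (𝓝 (⨆ a, ⨅ b, g a b)) := by
  have hgb : ∀ a, BddBelow (range (g a)) := fun a =>
    ⟨-C, by rintro _ ⟨b, rfl⟩; exact (abs_le.1 (hg a b)).1⟩
  have hga : BddAbove (range fun a => ⨅ b, g a b) := ⟨C, by
    rintro _ ⟨a, rfl⟩
    exact (ciInf_le (hgb a) (Classical.arbitrary β)).trans (abs_le.1 (hg a _)).2⟩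
  refine tendsto_iff_norm_sub_tendsto_zero.2 (squeeze_zero_norm (fun n => ?_) hδ)
  rw [norm_norm, Real.norm_eq_abs]
  exact abs_ciSup_sub_ciSup_le hga fun a => abs_ciInf_sub_ciInf_le (hgb a) (hfg n a)

end IsaacsBound

namespace Finset

theorem sum_sum_filter_lt_add_swap {κ M : Type*} [Fintype κ] [LinearOrder κ]
    [AddCommMonoid M] (g : κ → κ → M) :
    ∑ i, ∑ j ∈ univ.filter (fun j => i < j), (g i j + g j i)
      = ∑ i, ∑ j ∈ univ.erase i, g i j := by
  have hswap : ∑ i, ∑ j ∈ univ.filter (fun j => i < j), g j i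
      = ∑ i, ∑ j ∈ univ.filter (fun j => j < i), g i j :=
    sum_comm' fun i j => by simp
  have hsplit : ∀ i, ∑ j ∈ univ.erase i, g i j
      = ∑ j ∈ univ.filter (fun j => i < j), g i j + ∑ j ∈ univ.filter (fun j => j < i), g i j := by
    intro i
    rw [← sum_filter_add_sum_filter_not (univ.erase i) (fun j => i < j)]
    congr 2 <;> ext j <;> simp only [mem_filter, mem_erase, mem_univ] <;> grind
  simp only [sum_add_distrib, hswap, hsplit]

end Finset

namespace Paper

open Finset

variable {d : ℕ}

def stencil (A : Matrix (Fin d) (Fin d) ℝ) (q : E d → ℝ) : ℝ :=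
  (∑ i : Fin d, (A i i - ∑ j ∈ univ.erase i, |A i j|) * q (e d i)) +
  ∑ i : Fin d, ∑ j ∈ univ.filter (fun j => i < j),
    (max (A i j) 0 * q (e d i + e d j) + max (-A i j) 0 * q (e d i - e d j))

def stencilMass (q : E d → ℝ) : ℝ :=
  (∑ i : Fin d, |q (e d i)|) +
  ∑ i : Fin d, ∑ j ∈ univ.filter (fun j => i < j), (|q (e d i + e d j)| + |q (e d i - e d j)|)

theorem Lh_eq_stencil (h : ℝ) (A : Matrix (Fin d) (Fin d) ℝ) (u : E d → ℝ) (x : E d) :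
    Lh d h A u x = stencil A (fun v => (u (x + h • v) + u (x - h • v) - 2 * u x) / h ^ 2) :=
  rfl

theorem stencil_sub (A : Matrix (Fin d) (Fin d) ℝ) (q q' : E d → ℝ) :
    stencil A (q - q') = stencil A q - stencil A q' := by
  simp only [stencil, Pi.sub_apply, mul_sub, sub_add_sub_comm, sum_sub_distrib]

theorem DiagDominant.abs_apply_le {A : Matrix (Fin d) (Fin d) ℝ} (hA : DiagDominant A)
    {i j : Fin d} (hij : j ≠ i) : |A i j| ≤ A i i :=
  (single_le_sum (f := fun k => |A i k|) (fun _ _ => abs_nonneg _)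
    (mem_erase.2 ⟨hij, mem_univ j⟩)).trans (hA i)

theorem abs_stencil_le {A : Matrix (Fin d) (Fin d) ℝ} {Lam : ℝ} (hA : DiagDominant A)
    (hLam : ∀ i, A i i ≤ Lam) (q : E d → ℝ) : |stencil A q| ≤ Lam * stencilMass q := by
  have hcoef : ∀ c t : ℝ, 0 ≤ c → c ≤ Lam → |c * t| ≤ Lam * |t| := fun c t hc hcL => by
    rw [abs_mul, abs_of_nonneg hc]
    exact mul_le_mul_of_nonneg_right hcL (abs_nonneg t)
  have hoff : ∀ i j : Fin d, j ∈ univ.filter (fun j => i < j) → |A i j| ≤ Lam := fun i j hj =>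
    (hA.abs_apply_le (mem_filter.1 hj).2.ne').trans (hLam i)
  calc |stencil A q|
      ≤ (∑ i, |(A i i - ∑ j ∈ univ.erase i, |A i j|) * q (e d i)|) +
        ∑ i, ∑ j ∈ univ.filter (fun j => i < j),
          (|max (A i j) 0 * q (e d i + e d j)| + |max (-A i j) 0 * q (e d i - e d j)|) :=
        (abs_add_le _ _).trans (add_le_add (abs_sum_le_sum_abs _ _)
          ((abs_sum_le_sum_abs _ _).trans (sum_le_sum fun i _ =>
            (abs_sum_le_sum_abs _ _).trans (sum_le_sum fun j _ => abs_add_le _ _))))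
    _ ≤ (∑ i, Lam * |q (e d i)|) +
        ∑ i, ∑ j ∈ univ.filter (fun j => i < j),
          (Lam * |q (e d i + e d j)| + Lam * |q (e d i - e d j)|) := by
        refine add_le_add (sum_le_sum fun i _ => hcoef _ _ (sub_nonneg.2 (hA i))
          ((sub_le_self _ (sum_nonneg fun _ _ => abs_nonneg _)).trans (hLam i)))
          (sum_le_sum fun i _ => sum_le_sum fun j hj => add_le_add ?_ ?_)
        · exact hcoef _ _ (le_max_right _ _) (max_le ((le_abs_self _).trans (hoff i j hj))
            ((abs_nonneg _).trans (hoff i j hj)))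
        · exact hcoef _ _ (le_max_right _ _) (max_le ((neg_le_abs _).trans (hoff i j hj))
            ((abs_nonneg _).trans (hoff i j hj)))
    _ = Lam * stencilMass q := by simp only [stencilMass, mul_add, mul_sum]

theorem stencil_apply_self_eq_trace {A : Matrix (Fin d) (Fin d) ℝ} (hA : A.IsHermitian)
    (B : E d →L[ℝ] E d →L[ℝ] ℝ) (hB : ∀ v w, B v w = B w v) :
    stencil A (fun v => B v v) = (A * Matrix.of fun i j => B (e d i) (e d j)).trace := by
  have hAsymm : ∀ i j, A j i = A i j := fun i j => by simpa using hA.apply i j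
  have hposneg : ∀ a s t : ℝ,
      max a 0 * (s + 2 * t) + max (-a) 0 * (s - 2 * t) = |a| * s + 2 * (a * t) := fun a s t => by
    linear_combination s * max_zero_add_max_neg_zero_eq_abs_self a
      + 2 * t * max_zero_sub_max_neg_zero_eq_self a
  have hdir : ∀ i j : Fin d,
      max (A i j) 0 * B (e d i + e d j) (e d i + e d j)
        + max (-A i j) 0 * B (e d i - e d j) (e d i - e d j)
      = (|A i j| * B (e d i) (e d i) + A i j * B (e d i) (e d j))
        + (|A j i| * B (e d j) (e d j) + A j i * B (e d j) (e d i)) := fun i j => by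
    have h := hposneg (A i j) (B (e d i) (e d i) + B (e d j) (e d j)) (B (e d i) (e d j))
    simp only [map_add, map_sub, add_apply, sub_apply, hB (e d j) (e d i), hAsymm i j] at h ⊢
    linear_combination h
  simp only [stencil, hdir]
  rw [sum_sum_filter_lt_add_swap
    (fun i j => |A i j| * B (e d i) (e d i) + A i j * B (e d i) (e d j))]
  simp only [Matrix.trace, Matrix.diag_apply, Matrix.mul_apply, Matrix.of_apply,
    hB (e d _) (e d _)]
  rw [← sum_add_distrib]
  refine sum_congr rfl fun i _ => ?_
  rw [sum_add_distrib, ← sum_mul, ← add_sum_erase _ _ (mem_univ i)]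
  ring

theorem tendsto_stencilMass_zero {ι : Type*} {l : Filter ι} {q : ι → E d → ℝ}
    (hq : ∀ v, Tendsto (fun n => q n v) l (𝓝 0)) :
    Tendsto (fun n => stencilMass (q n)) l (𝓝 0) := by
  have habs : ∀ v, Tendsto (fun n => |q n v|) l (𝓝 0) := fun v => by simpa using (hq v).abs
  simpa [stencilMass] using (tendsto_finsetSum _ fun i _ => habs (e d i)).add
    (tendsto_finsetSum _ fun i _ => tendsto_finsetSum _ fun j _ => (habs _).add (habs _))

theorem diag_le_of_posSemidef_smul_one_sub {n : Type*} [Fintype n] [DecidableEq n]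
    {A : Matrix n n ℝ} {Lam : ℝ} (hA : (Lam • (1 : Matrix n n ℝ) - A).PosSemidef) (i : n) :
    A i i ≤ Lam := by
  simpa using hA.diag_nonneg (i := i)

theorem hessianMatrix_eq {φ : E d → ℝ} {x : E d} (hφ : DifferentiableAt ℝ (fderiv ℝ φ) x) :
    hessianMatrix d φ x = Matrix.of fun i j => fderiv ℝ (fderiv ℝ φ) x (e d i) (e d j) := by
  ext i j
  simp [hessianMatrix, fderiv_clm_apply hφ (differentiableAt_const (e d j))]

theorem tendsto_Fh {ιA ιB : Type*} [Nonempty ιA] [Nonempty ιB] {lam Lam : ℝ}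
    {A : ιA → ιB → Matrix (Fin d) (Fin d) ℝ} (hA : IsaacsData d lam Lam A) {φ : E d → ℝ}
    (hφ : ContDiff ℝ 2 φ) {ι : Type*} {l : Filter ι} {h : ι → ℝ} {y : ι → E d} {x : E d}
    (hpos : ∀ n, 0 < h n) (hh : Tendsto h l (𝓝 0)) (hy : Tendsto y l (𝓝 x)) :
    Tendsto (fun n => Fh d (h n) A φ (y n)) l
      (𝓝 (⨆ a, ⨅ b, -((A a b) * hessianMatrix d φ x).trace)) := by
  set B := fderiv ℝ (fderiv ℝ φ) x
  have hB : ∀ v w, B v w = B w v := hφ.contDiffAt.isSymmSndFDerivAt (by simp)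
  have hLam : ∀ a b i, A a b i i ≤ Lam := fun a b =>
    diag_le_of_posSemidef_smul_one_sub (hA a b).2.2.2
  have htrace : ∀ a b, (A a b * hessianMatrix d φ x).trace = stencil (A a b) (fun v => B v v) :=
    fun a b => by
      rw [hessianMatrix_eq ((hφ.fderiv_right le_rfl).differentiable one_ne_zero x),
        stencil_apply_self_eq_trace (hA a b).1 B hB]
  set D : ι → E d → ℝ := fun n v =>
    (φ (y n + h n • v) + φ (y n - h n • v) - 2 * φ (y n)) / h n ^ 2
  have hD : ∀ v, Tendsto (fun n => (D n - fun v => B v v) v) l (𝓝 0) := fun v => by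
    rw [← sub_self (B v v)]
    exact (tendsto_secondDiff_fderiv_fderiv hφ v hpos hh hy).sub_const (B v v)
  simp only [htrace]
  refine tendsto_ciSup_ciInf (C := Lam * stencilMass (fun v => B v v))
    (fun a b => by rw [abs_neg]; exact abs_stencil_le (hA a b).2.1 (hLam a b) _)
    (by simpa using (tendsto_stencilMass_zero hD).const_mul Lam) fun n a b => ?_
  rw [Lh_eq_stencil, neg_sub_neg, abs_sub_comm, ← stencil_sub]
  exact abs_stencil_le (hA a b).2.1 (hLam a b) _

theorem upwindSq_eq_sum_sq {h : ℝ} (hh : 0 < h) (u : E d → ℝ) (x : E d) :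
    upwindSq d h u x = ∑ i, max (max ((u x - u (x + h • e d i)) / h)
      ((u x - u (x - h • e d i)) / h)) 0 ^ 2 := by
  have hmax : ∀ a b : ℝ, max (max (a / h) (b / h)) 0 = max (max a b) 0 / h := fun a b => by
    rw [max_div_div_right hh.le, eq_div_iff hh.ne', max_mul_of_nonneg _ _ hh.le, zero_mul,
      div_mul_cancel₀ _ hh.ne']
  rw [upwindSq, mul_sum]
  exact sum_congr rfl fun i _ => by rw [hmax, div_pow, one_div_mul_eq_div]

theorem fderiv_apply_e_eq_gradient (φ : E d → ℝ) (x : E d) (i : Fin d) :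
    fderiv ℝ φ x (e d i) = gradient φ x i := by
  rw [gradient, ← InnerProductSpace.toDual_symm_apply, e, EuclideanSpace.inner_single_right]
  simp

theorem tendsto_upwindSq {φ : E d → ℝ} (hφ : ContDiff ℝ 1 φ) {ι : Type*} {l : Filter ι}
    {h : ι → ℝ} {y : ι → E d} {x : E d}
    (hpos : ∀ n, 0 < h n) (hh : Tendsto h l (𝓝 0)) (hy : Tendsto y l (𝓝 x)) :
    Tendsto (fun n => upwindSq d (h n) φ (y n)) l (𝓝 (‖gradient φ x‖ ^ 2)) := by
  have hfwd : ∀ i, Tendsto (fun n => (φ (y n) - φ (y n + h n • e d i)) / h n) l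
      (𝓝 (-fderiv ℝ φ x (e d i))) := fun i =>
    (tendsto_slope_fderiv hφ (e d i) hpos hh hy).neg.congr fun n => by rw [← neg_div, neg_sub]
  have hbwd : ∀ i, Tendsto (fun n => (φ (y n) - φ (y n - h n • e d i)) / h n) l
      (𝓝 (fderiv ℝ φ x (e d i))) := fun i => by
    have hlim := (tendsto_slope_fderiv hφ (-e d i) hpos hh hy).neg
    rw [map_neg, neg_neg] at hlim
    exact hlim.congr fun n => by rw [smul_neg, ← sub_eq_add_neg, ← neg_div, neg_sub]
  simp only [upwindSq_eq_sum_sq (hpos _), EuclideanSpace.norm_sq_eq, Real.norm_eq_abs, sq_abs,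
    ← fderiv_apply_e_eq_gradient]
  refine tendsto_finsetSum _ fun i _ => ?_
  have hmax := (((hfwd i).max (hbwd i)).max (tendsto_const_nhds (x := (0 : ℝ)))).pow 2
  rwa [max_comm (-_), ← abs_eq_max_neg, max_eq_left (abs_nonneg _), sq_abs] at hmax

theorem scheme_interior_consistent_general {d : ℕ} (lam Lam ε θ : ℝ)
    (hε : 0 < ε)
    {ιA ιB : Type*} [Nonempty ιA] [Nonempty ιB]
    (A : ιA → ιB → Matrix (Fin d) (Fin d) ℝ) (hA : IsaacsData d lam Lam A)
    (φ : E d → ℝ) (hφ : ContDiff ℝ 2 φ)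
    (f : E d → ℝ) (hf : Continuous f) (x : E d)
    (hs : ℕ → ℝ) (ys : ℕ → E d) (ξs : ℕ → ℝ)
    (hpos : ∀ n, 0 < hs n)
    (hh : Filter.Tendsto hs Filter.atTop (nhds 0))
    (hy : Filter.Tendsto ys Filter.atTop (nhds x))
    (hξ : Filter.Tendsto ξs Filter.atTop (nhds 0)) :
    Filter.Tendsto
      (fun n => ε * (φ (ys n) + ξs n) + Fh d (hs n) A φ (ys n)
        - f (ys n) / (ε + upwindSq d (hs n) φ (ys n)) ^ (θ / 2))
      Filter.atTop
      (nhds (ε * φ x + (⨆ a : ιA, ⨅ b : ιB, -((A a b) * hessianMatrix d φ x).trace)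
        - f x / (ε + ‖gradient φ x‖ ^ 2) ^ (θ / 2))) := by
  have hbase : 0 < ε + ‖gradient φ x‖ ^ 2 := by positivity
  have hvalue : Tendsto (fun n => ε * (φ (ys n) + ξs n)) atTop (𝓝 (ε * φ x)) := by
    simpa using (((hφ.continuous.tendsto x).comp hy).add hξ).const_mul ε
  have hweight := ((tendsto_upwindSq (hφ.of_le one_le_two) hpos hh hy).const_add ε).rpow_const
    (p := θ / 2) (Or.inl hbase.ne')
  exact (hvalue.add (tendsto_Fh hA hφ hpos hh hy)).sub
    (((hf.tendsto x).comp hy).div hweight (Real.rpow_pos_of_pos hbase _).ne')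

/-- Interior consistency of the scheme with the regularised
equation: along `hₙ → 0⁺`, `yₙ → x`, `ξₙ → 0`, the discrete operator applied to a
`C²` test function converges to the continuous regularised operator at `x`. -/
theorem scheme_interior_consistent {d : ℕ} (hd : 1 ≤ d) (lam Lam ε θ : ℝ)
    (hlam : 0 < lam) (hlamLam : lam ≤ Lam) (hε : 0 < ε) (hθ : 1 ≤ θ)
    {ιA ιB : Type*} [Nonempty ιA] [Nonempty ιB]
    (A : ιA → ιB → Matrix (Fin d) (Fin d) ℝ) (hA : IsaacsData d lam Lam A)
    (φ : E d → ℝ) (hφ : ContDiff ℝ 2 φ)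
    (f : E d → ℝ) (hf : Continuous f) (x : E d)
    (hs : ℕ → ℝ) (ys : ℕ → E d) (ξs : ℕ → ℝ)
    (hpos : ∀ n, 0 < hs n)
    (hh : Filter.Tendsto hs Filter.atTop (nhds 0))
    (hy : Filter.Tendsto ys Filter.atTop (nhds x))
    (hξ : Filter.Tendsto ξs Filter.atTop (nhds 0)) :
    Filter.Tendsto
      (fun n => ε * (φ (ys n) + ξs n) + Fh d (hs n) A φ (ys n)
        - f (ys n) / (ε + upwindSq d (hs n) φ (ys n)) ^ (θ / 2))
      Filter.atTop
      (nhds (ε * φ x + (⨆ a : ιA, ⨅ b : ιB, -((A a b) * hessianMatrix d φ x).trace)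
        - f x / (ε + ‖gradient φ x‖ ^ 2) ^ (θ / 2))) :=
  scheme_interior_consistent_general lam Lam ε θ hε A hA φ hφ f hf x hs ys ξs hpos hh hy hξ

end Paper
end
end

section
/- (Discrete global barriers.) Let d ≥ 1, 0 < λ ≤ Λ, θ ≥ 1, R > 0 and K_f, K_g ≥ 0. Then there exist h₀ > 0 depending only on λ, and constants C₁, C₂, C > 0 depending only on d, λ, θ, R, K_f and K_g, such that the following holds. For every h ∈ (0, h₀), every ε ∈ (0,1), every grid Ω̄_h = Ω_h ∪ ∂Ω_h contained in the closed ball of radius R centred at the origin, every Isaacs data with ellipticity constants (λ,Λ), every f : Ω_h → ℝ with |f| ≤ K_f and every g : ∂Ω_h → ℝ with |g| ≤ K_g, the functions w̄(x) := C₂ − C₁ ‖x − x₀‖² and w̲ := −w̄, where x₀ := (R + √λ)(e₁ + ⋯ + e_d), satisfy: w̲ ≤ g ≤ w̄ on ∂Ω_h; G_h(w̲, x) ≤ 0 ≤ G_h(w̄, x) for every x ∈ Ω̄_h; and |w̄(x)| ≤ C for every x in the closed ball of radius R. In particular the barriers are independent of h and ε. -/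
/-
The paraboloid `w̄ = C₂ - C₁ ‖x - x₀‖²` is handled exactly by the monotone scheme: its second
difference along `h v` is `-2 C₁ h² ‖v‖²`, and the weights of `L_h^A` on the axis and diagonal
directions recombine to `tr A`, so `L_h^A w̄ = -2 C₁ tr A` and `F_h w̄ ≥ 2 C₁ λ d ≥ K_f` once
`2 C₁ λ ≥ K_f`. Since `x₀` lies at distance at least `√λ` beyond the ball in every coordinate,
for `h ≤ √λ` the one-sided differences of `±w̄` along `e₁` are at least `C₁ √λ h`; with
`C₁ √λ ≥ 1` this makes `|D_h (±w̄)|² ≥ 1`, so the source term is bounded by `K_f`. Taking `C₂`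
so large that `w̄ ≥ K_g + 1` on the ball gives the boundary inequalities and the sign of `ε w̄`.
-/

open scoped BigOperators
open MeasureTheory
open scoped Classical

noncomputable section

namespace Paper

open Finset

lemma sum_sum_erase_eq_two_nsmul {ι M : Type*} [Fintype ι] [LinearOrder ι] [AddCommMonoid M]
    (g : ι → ι → M) (hg : ∀ i j, g i j = g j i) :
    ∑ i, ∑ j ∈ univ.erase i, g i j = 2 • ∑ i, ∑ j ∈ univ with i < j, g i j := by
  have hsplit : ∀ i, ∑ j ∈ univ.erase i, g i j
      = ∑ j ∈ univ with i < j, g i j + ∑ j ∈ univ with j < i, g i j := by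
    intro i
    rw [← sum_filter_add_sum_filter_not (univ.erase i) (i < ·)]
    congr 2 <;> ext j <;> grind
  have hswap : ∑ i, ∑ j ∈ univ with j < i, g i j = ∑ i, ∑ j ∈ univ with i < j, g i j := by
    rw [sum_comm' (t' := univ) (s' := fun j => univ.filter (j < ·)) (by simp)]
    exact sum_congr rfl fun i _ => sum_congr rfl fun j _ => hg j i
  simp only [hsplit, sum_add_distrib, hswap, two_nsmul]

section TraceBounds

variable {n : Type*} [Fintype n] [DecidableEq n] {A : Matrix n n ℝ}

lemma mul_card_le_trace {lam : ℝ} (hA : (A - lam • (1 : Matrix n n ℝ)).PosSemidef) :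
    lam * Fintype.card n ≤ A.trace := by
  have := hA.trace_nonneg
  rw [Matrix.trace_sub, Matrix.trace_smul, Matrix.trace_one, smul_eq_mul] at this
  linarith

lemma trace_le_mul_card {Lam : ℝ} (hA : (Lam • (1 : Matrix n n ℝ) - A).PosSemidef) :
    A.trace ≤ Lam * Fintype.card n := by
  have := hA.trace_nonneg
  rw [Matrix.trace_sub, Matrix.trace_smul, Matrix.trace_one, smul_eq_mul] at this
  linarith

end TraceBounds

lemma ciSup_ciInf_mem_Icc {α ι κ : Type*} [ConditionallyCompleteLattice α] [Nonempty ι]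
    [Nonempty κ] {t : ι → κ → α} {lo hi : α} (ht : ∀ i j, t i j ∈ Set.Icc lo hi) :
    ⨆ i, ⨅ j, t i j ∈ Set.Icc lo hi := by
  have hinf : ∀ i, ⨅ j, t i j ∈ Set.Icc lo hi := fun i =>
    ⟨le_ciInf fun j => (ht i j).1,
      (ciInf_le ⟨lo, Set.forall_mem_range.2 fun j => (ht i j).1⟩ (Classical.arbitrary κ)).trans
        (ht i _).2⟩
  exact ⟨le_ciSup_of_le ⟨hi, Set.forall_mem_range.2 fun i => (hinf i).2⟩
      (Classical.arbitrary ι) (hinf _).1, ciSup_le fun i => (hinf i).2⟩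

lemma abs_div_rpow_le_abs {a b θ : ℝ} (hb : 1 ≤ b) (hθ : 0 ≤ θ) : |a / b ^ θ| ≤ |a| := by
  rw [abs_div]
  exact div_le_self (abs_nonneg _) ((Real.one_le_rpow hb hθ).trans (le_abs_self _))

lemma paraboloid_second_difference {F : Type*} [NormedAddCommGroup F] [InnerProductSpace ℝ F]
    (a c : ℝ) (x₀ x v : F) :
    (c - a * ‖x + v - x₀‖ ^ 2) + (c - a * ‖x - v - x₀‖ ^ 2) - 2 * (c - a * ‖x - x₀‖ ^ 2)
      = -(2 * a * ‖v‖ ^ 2) := by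
  have := parallelogram_law_with_norm ℝ (x - x₀) v
  rw [show x + v - x₀ = x - x₀ + v by abel, show x - v - x₀ = x - x₀ - v by abel]
  linear_combination (-a) * this

lemma paraboloid_mem_Icc {F : Type*} [SeminormedAddCommGroup F] {a b R : ℝ} (ha : 0 ≤ a)
    {x₀ x : F} (hx : ‖x‖ ≤ R) :
    a * (R + ‖x₀‖) ^ 2 + b - a * ‖x - x₀‖ ^ 2 ∈ Set.Icc b (a * (R + ‖x₀‖) ^ 2 + b) := by
  have : ‖x - x₀‖ ≤ R + ‖x₀‖ := (norm_sub_le x x₀).trans (by linarith)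
  constructor
  · have : a * ‖x - x₀‖ ^ 2 ≤ a * (R + ‖x₀‖) ^ 2 := by gcongr
    linarith
  · nlinarith [sq_nonneg ‖x - x₀‖]

section BasisVectors

variable {d : ℕ}

lemma norm_e (i : Fin d) : ‖e d i‖ = 1 := by
  simp [e]

lemma inner_e_right (v : E d) (i : Fin d) : inner ℝ v (e d i) = v i := by
  simp [e, EuclideanSpace.inner_single_right]

lemma norm_e_add_e_sq {i j : Fin d} (hij : i ≠ j) : ‖e d i + e d j‖ ^ 2 = 2 := by
  rw [norm_add_sq_real, norm_e, norm_e, inner_e_right, e, PiLp.single_apply, if_neg hij.symm]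
  norm_num

lemma norm_e_sub_e_sq {i j : Fin d} (hij : i ≠ j) : ‖e d i - e d j‖ ^ 2 = 2 := by
  rw [norm_sub_sq_real, norm_e, norm_e, inner_e_right, e, PiLp.single_apply, if_neg hij.symm]
  norm_num

lemma smul_sum_e_apply (s : ℝ) (j : Fin d) : (s • ∑ i, e d i) j = s := by
  simp [e]

lemma norm_add_smul_e_sub_sq (x x₀ : E d) (t : ℝ) (i : Fin d) :
    ‖x + t • e d i - x₀‖ ^ 2 = ‖x - x₀‖ ^ 2 + 2 * t * (x i - x₀ i) + t ^ 2 := by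
  rw [show x + t • e d i - x₀ = (x - x₀) + t • e d i by abel, norm_add_sq_real,
    real_inner_smul_right, inner_e_right, norm_smul, norm_e, Real.norm_eq_abs]
  simp only [PiLp.sub_apply, mul_one, sq_abs]
  ring

lemma le_smul_sum_e_sub {R : ℝ} (s : ℝ) {x : E d} (hx : ‖x‖ ≤ R) (i : Fin d) :
    s ≤ ((R + s) • ∑ j, e d j) i - x i := by
  have : x i ≤ R := (le_abs_self _).trans ((PiLp.norm_apply_le x i).trans hx)
  rw [smul_sum_e_apply]
  linarith

end BasisVectors

section Discretisation

variable {d : ℕ} {h : ℝ}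

lemma Lh_neg (A : Matrix (Fin d) (Fin d) ℝ) (u : E d → ℝ) (x : E d) :
    Lh d h A (fun y => -u y) x = -Lh d h A u x := by
  simp only [Lh, neg_add, ← sum_neg_distrib]
  congr 1 <;> refine sum_congr rfl fun i _ => ?_
  · ring
  · exact sum_congr rfl fun j _ => by ring

lemma Lh_paraboloid (hh : h ≠ 0) {A : Matrix (Fin d) (Fin d) ℝ} (hA : A.IsHermitian)
    (a c : ℝ) (x₀ x : E d) :
    Lh d h A (fun y => c - a * ‖y - x₀‖ ^ 2) x = -(2 * a * A.trace) := by
  have hsecond : ∀ v : E d, ((c - a * ‖x + h • v - x₀‖ ^ 2) + (c - a * ‖x - h • v - x₀‖ ^ 2)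
      - 2 * (c - a * ‖x - x₀‖ ^ 2)) / h ^ 2 = -(2 * a * ‖v‖ ^ 2) := by
    intro v
    rw [paraboloid_second_difference, norm_smul, Real.norm_eq_abs, mul_pow, sq_abs]
    field_simp
  have hoff : ∀ i, ∀ j ∈ univ.filter (i < ·),
      max (A i j) 0 * -(2 * a * ‖e d i + e d j‖ ^ 2)
        + max (-A i j) 0 * -(2 * a * ‖e d i - e d j‖ ^ 2) = -(2 * a) * (2 * |A i j|) := by
    intro i j hj
    have hij : i ≠ j := (mem_filter.1 hj).2.ne
    rw [norm_e_add_e_sq hij, norm_e_sub_e_sq hij, ← max_zero_add_max_neg_zero_eq_abs_self]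
    ring
  have hpairs := sum_sum_erase_eq_two_nsmul (fun i j => |A i j|)
    fun i j => by rw [← hA.apply i j, star_trivial]
  simp only [Lh, hsecond, norm_e, one_pow, mul_one]
  rw [sum_congr rfl fun i _ => sum_congr rfl (hoff i)]
  simp only [← mul_sum, ← sum_mul, sum_sub_distrib]
  rw [hpairs, nsmul_eq_mul, Matrix.trace]
  simp only [Matrix.diag_apply]
  ring

lemma Fh_paraboloid_mem_Icc {ιA ιB : Type*} [Nonempty ιA] [Nonempty ιB] {lam Lam : ℝ}
    {A : ιA → ιB → Matrix (Fin d) (Fin d) ℝ} (hA : IsaacsData d lam Lam A) (hh : h ≠ 0)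
    {a : ℝ} (ha : 0 ≤ a) (c : ℝ) (x₀ x : E d) :
    Fh d h A (fun y => c - a * ‖y - x₀‖ ^ 2) x ∈ Set.Icc (2 * a * (lam * d)) (2 * a * (Lam * d))
      ∧ Fh d h A (fun y => -(c - a * ‖y - x₀‖ ^ 2)) x
        ∈ Set.Icc (-(2 * a * (Lam * d))) (-(2 * a * (lam * d))) := by
  have htrace : ∀ α β, (A α β).trace ∈ Set.Icc (lam * d) (Lam * d) := fun α β => by
    obtain ⟨-, -, hlo, hhi⟩ := hA α β
    simpa using And.intro (mul_card_le_trace hlo) (trace_le_mul_card hhi)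
  constructor <;> refine ciSup_ciInf_mem_Icc fun α β => ?_
  · rw [Lh_paraboloid hh (hA α β).1, neg_neg]
    exact ⟨by gcongr; exact (htrace α β).1, by gcongr; exact (htrace α β).2⟩
  · rw [Lh_neg, Lh_paraboloid hh (hA α β).1, neg_neg]
    exact ⟨neg_le_neg (by gcongr; exact (htrace α β).2),
      neg_le_neg (by gcongr; exact (htrace α β).1)⟩

lemma sq_le_upwindSq (hh : 0 < h) (u : E d → ℝ) (x : E d) (i : Fin d) {c : ℝ} (hc : 0 ≤ c)
    (hi : c * h ≤ max (u x - u (x + h • e d i)) (u x - u (x - h • e d i))) :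
    c ^ 2 ≤ upwindSq d h u x := by
  have hterm :
      (c * h) ^ 2 ≤ max (max (u x - u (x + h • e d i)) (u x - u (x - h • e d i))) 0 ^ 2 :=
    pow_le_pow_left₀ (by positivity) (hi.trans (le_max_left _ _)) 2
  calc c ^ 2 = 1 / h ^ 2 * (c * h) ^ 2 := by field_simp
    _ ≤ upwindSq d h u x := by
      unfold upwindSq
      gcongr
      exact hterm.trans (single_le_sum (fun j _ => sq_nonneg _) (mem_univ i)
        (f := fun j => max (max (u x - u (x + h • e d j)) (u x - u (x - h • e d j))) 0 ^ 2))

lemma sq_le_upwindSq_paraboloid (hh : 0 < h) {a s : ℝ} (ha : 0 ≤ a) (hhs : h ≤ s) (c : ℝ)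
    {x₀ x : E d} {i : Fin d} (hi : s ≤ x₀ i - x i) :
    (a * s) ^ 2 ≤ upwindSq d h (fun y => c - a * ‖y - x₀‖ ^ 2) x
      ∧ (a * s) ^ 2 ≤ upwindSq d h (fun y => -(c - a * ‖y - x₀‖ ^ 2)) x := by
  have hs : 0 ≤ a * s := mul_nonneg ha (hh.le.trans hhs)
  have hback := norm_add_smul_e_sub_sq x x₀ (-h) i
  have hfwd := norm_add_smul_e_sub_sq x x₀ h i
  have hgap : a * h * s ≤ a * h * (x₀ i - x i) := by gcongr
  rw [neg_smul, ← sub_eq_add_neg] at hback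
  constructor <;> refine sq_le_upwindSq hh _ x i hs ?_
  · refine le_max_of_le_right ?_
    rw [hback]
    nlinarith [mul_nonneg (mul_nonneg ha hh.le) hs]
  · refine le_max_of_le_left ?_
    rw [hfwd]
    have : a * h * h ≤ a * h * s := by gcongr
    linarith

end Discretisation

section Scheme

variable {d : ℕ} {ιA ιB : Type*} {h ε θ : ℝ} {A : ιA → ιB → Matrix (Fin d) (Fin d) ℝ}
  {G : Grid d h} {f g u : E d → ℝ} {x : E d}

lemma scheme_of_not_mem_interior (hx : x ∉ G.interior) :
    scheme d ε θ A G f g u x = u x - g x :=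
  if_neg hx

lemma scheme_nonneg_of_mem_interior (hx : x ∈ G.interior) (hε : 0 ≤ ε) (hθ : 0 ≤ θ)
    (hu : 0 ≤ u x) (hD : 1 ≤ upwindSq d h u x) (hF : |f x| ≤ Fh d h A u x) :
    0 ≤ scheme d ε θ A G f g u x := by
  have := abs_le.1 (abs_div_rpow_le_abs (a := f x) (by linarith : 1 ≤ ε + upwindSq d h u x)
    (by linarith : 0 ≤ θ / 2))
  rw [scheme, if_pos hx]
  linarith [mul_nonneg hε hu]

lemma scheme_nonpos_of_mem_interior (hx : x ∈ G.interior) (hε : 0 ≤ ε) (hθ : 0 ≤ θ)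
    (hu : u x ≤ 0) (hD : 1 ≤ upwindSq d h u x) (hF : Fh d h A u x ≤ -|f x|) :
    scheme d ε θ A G f g u x ≤ 0 := by
  have := abs_le.1 (abs_div_rpow_le_abs (a := f x) (by linarith : 1 ≤ ε + upwindSq d h u x)
    (by linarith : 0 ≤ θ / 2))
  rw [scheme, if_pos hx]
  linarith [mul_nonpos_iff.2 (Or.inl ⟨hε, hu⟩)]

end Scheme

lemma scheme_paraboloid_of_mem_interior {d : ℕ} {ιA ιB : Type*} [Nonempty ιA] [Nonempty ιB]
    {lam Lam h ε θ a c s : ℝ} {A : ιA → ιB → Matrix (Fin d) (Fin d) ℝ}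
    (hA : IsaacsData d lam Lam A) {G : Grid d h} {f g : E d → ℝ} {x₀ x : E d} {i : Fin d}
    (hx : x ∈ G.interior) (hh : 0 < h) (hε : 0 ≤ ε) (hθ : 0 ≤ θ) (has : 1 ≤ a * s)
    (hhs : h ≤ s) (hgap : s ≤ x₀ i - x i) (hf : |f x| ≤ 2 * a * (lam * d))
    (hw : 0 ≤ c - a * ‖x - x₀‖ ^ 2) :
    scheme d ε θ A G f g (fun y => -(c - a * ‖y - x₀‖ ^ 2)) x ≤ 0
      ∧ 0 ≤ scheme d ε θ A G f g (fun y => c - a * ‖y - x₀‖ ^ 2) x := by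
  have ha : 0 ≤ a := nonneg_of_mul_nonneg_left (by linarith) (hh.trans_le hhs)
  have hD : 1 ≤ (a * s) ^ 2 := one_le_pow₀ has
  obtain ⟨hup, hup_neg⟩ := sq_le_upwindSq_paraboloid hh ha hhs c hgap
  obtain ⟨hF, hF_neg⟩ := Fh_paraboloid_mem_Icc hA hh.ne' ha c x₀ x
  exact ⟨scheme_nonpos_of_mem_interior hx hε hθ (by linarith) (hD.trans hup_neg)
      (by linarith [hF_neg.2]),
    scheme_nonneg_of_mem_interior hx hε hθ hw (hD.trans hup) (by linarith [hF.1])⟩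


lemma exists_barrier_slope {lam K : ℝ} (hlam : 0 < lam) (hK : 0 ≤ K) :
    ∃ a > 0, 1 ≤ a * √lam ∧ K ≤ 2 * a * lam := by
  have hsqrt : 0 < √lam := Real.sqrt_pos.2 hlam
  refine ⟨1 / √lam + K / (2 * lam), by positivity, ?_, ?_⟩
  · have : 0 ≤ K / (2 * lam) * √lam := by positivity
    rw [add_mul, one_div_mul_cancel hsqrt.ne']
    linarith
  · have : 2 * (1 / √lam + K / (2 * lam)) * lam = 2 * lam / √lam + K := by field_simp
    rw [this]
    linarith [show 0 ≤ 2 * lam / √lam by positivity]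

/-- Discrete global barriers: there are `h₀ > 0` (depending only
on `λ`) and constants `C₁, C₂, C > 0` (depending only on `d, λ, θ, R, K_f, K_g`)
such that `w̄(x) = C₂ − C₁‖x − x₀‖²` (with `x₀ = (R + √λ)(e₁ + ⋯ + e_d)`) and
`w̲ = −w̄` are discrete super- and sub-solutions of the scheme, dominating `g`
on the boundary, and bounded by `C` on the ball of radius `R`, uniformly in `h`
and `ε`. -/
theorem discrete_global_barriers (lam : ℝ) (hlam : 0 < lam) :
    ∃ h₀ : ℝ, 0 < h₀ ∧
    ∀ (d : ℕ), 1 ≤ d →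
    ∀ (θ R Kf Kg : ℝ), 1 ≤ θ → 0 < R → 0 ≤ Kf → 0 ≤ Kg →
    ∃ C₁ C₂ C : ℝ, 0 < C₁ ∧ 0 < C₂ ∧ 0 < C ∧
    ∀ (Lam : ℝ), lam ≤ Lam →
    ∀ (h : ℝ), 0 < h → h < h₀ →
    ∀ (ε : ℝ), 0 < ε → ε < 1 →
    ∀ (G : Grid d h), (∀ x ∈ G.interior ∪ G.boundary, ‖x‖ ≤ R) →
    ∀ (ιA ιB : Type) (_ : Nonempty ιA) (_ : Nonempty ιB)
      (A : ιA → ιB → Matrix (Fin d) (Fin d) ℝ), IsaacsData d lam Lam A →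
    ∀ (f : E d → ℝ), (∀ x ∈ G.interior, |f x| ≤ Kf) →
    ∀ (g : E d → ℝ), (∀ x ∈ G.boundary, |g x| ≤ Kg) →
    let x₀ : E d := (R + Real.sqrt lam) • ∑ i : Fin d, e d i
    let wbar : E d → ℝ := fun y => C₂ - C₁ * ‖y - x₀‖ ^ 2
    (∀ x ∈ G.boundary, -wbar x ≤ g x ∧ g x ≤ wbar x) ∧
    (∀ x ∈ G.interior ∪ G.boundary,
      scheme d ε θ A G f g (fun y => -wbar y) x ≤ 0 ∧
      0 ≤ scheme d ε θ A G f g wbar x) ∧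
    (∀ x : E d, ‖x‖ ≤ R → |wbar x| ≤ C) := by
  refine ⟨√lam, Real.sqrt_pos.2 hlam, fun d hd θ R Kf Kg hθ _ hKf hKg => ?_⟩
  obtain ⟨C₁, hC₁, hC₁_sqrt, hKf_le⟩ := exists_barrier_slope hlam hKf
  have hKf_le' : Kf ≤ 2 * C₁ * (lam * d) :=
    hKf_le.trans (by gcongr; exact le_mul_of_one_le_right hlam.le (by exact_mod_cast hd))
  set C₂ := C₁ * (R + ‖(R + √lam) • ∑ i : Fin d, e d i‖) ^ 2 + (Kg + 1)
  refine ⟨C₁, C₂, C₂, hC₁, by positivity, by positivity, ?_⟩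
  intro Lam _ h hh hh₀ ε hε _ G hGR ιA ιB _ _ A hA f hf g hg x₀ wbar
  have hwbar : ∀ x, ‖x‖ ≤ R → wbar x ∈ Set.Icc (Kg + 1) C₂ := fun x hx =>
    paraboloid_mem_Icc hC₁.le hx
  have hbdry : ∀ x ∈ G.boundary, -wbar x ≤ g x ∧ g x ≤ wbar x := fun x hx => by
    have hw := hwbar x (hGR x (mem_union_right _ hx))
    have hgx := abs_le.1 (hg x hx)
    constructor <;> linarith [hw.1]
  refine ⟨hbdry, fun x hx => ?_, fun x hx => ?_⟩
  · have hw := hwbar x (hGR x hx)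
    rcases mem_union.1 hx with hint | hbd
    · exact scheme_paraboloid_of_mem_interior hA hint hh hε.le (by linarith) hC₁_sqrt hh₀.le
        (le_smul_sum_e_sub (√lam) (hGR x hx) ⟨0, hd⟩) ((hf x hint).trans hKf_le')
        (by linarith [hw.1])
    · have hnot : x ∉ G.interior := disjoint_right.1 G.disj hbd
      rw [scheme_of_not_mem_interior hnot, scheme_of_not_mem_interior hnot]
      constructor <;> linarith [hbdry x hbd]
  · have hw := hwbar x hx
    exact abs_le.2 ⟨by linarith [hw.1, hw.2], hw.2⟩

end Paper
end
end

section
/- (Discrete comparison principle for the scheme.) Let d ≥ 1, 0 < λ ≤ Λ, h > 0, ε > 0, θ ≥ 1. Fix a grid Ω̄_h = Ω_h ∪ ∂Ω_h, Isaacs data with ellipticity constants (λ,Λ), f : Ω_h → ℝ with f ≥ 0 on Ω_h, and g : ∂Ω_h → ℝ, and let G_h be the associated scheme. If u, w : Ω̄_h → ℝ are grid functions satisfying G_h(u, x) ≤ 0 ≤ G_h(w, x) for every x ∈ Ω̄_h, then u(x) ≤ w(x) for every x ∈ Ω̄_h. -/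
open scoped BigOperators
open MeasureTheory
open scoped Classical

noncomputable section

namespace Paper

/-! Take a maximum point `x₀` of `u - w` on the grid. On the boundary the scheme reads
`u - g ≤ 0 ≤ w - g`. At an interior point every second difference and every one-sided difference
of `u` at `x₀` is dominated by the corresponding one of `w`; since diagonal dominance makes all
coefficients of `L_h^A` nonnegative and `f ≥ 0` makes the gradient term decreasing in `|D_h u|`,
this gives `ε (u - w)(x₀) ≤ G_h(u, x₀) - G_h(w, x₀) ≤ 0`. -/

open Finset

def secondDiff (d : ℕ) (h : ℝ) (v : E d → ℝ) (x y : E d) : ℝ :=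
  (v (x + h • y) + v (x - h • y) - 2 * v x) / h ^ 2

section Lh

variable {d : ℕ} {h : ℝ} {M : Matrix (Fin d) (Fin d) ℝ}

lemma Lh_eq_sum_secondDiff (v : E d → ℝ) (x : E d) :
    Lh d h M v x =
      (∑ i, (M i i - ∑ j ∈ univ.erase i, |M i j|) * secondDiff d h v x (e d i)) +
      ∑ i, ∑ j ∈ univ.filter (fun j => i < j),
        (max (M i j) 0 * secondDiff d h v x (e d i + e d j) +
          max (-M i j) 0 * secondDiff d h v x (e d i - e d j)) :=
  rfl

lemma DiagDominant.abs_le_diag (hM : DiagDominant M) {i j : Fin d} (hji : j ≠ i) :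
    |M i j| ≤ M i i :=
  (single_le_sum (f := fun k => |M i k|) (fun _ _ => abs_nonneg _)
    (mem_erase.mpr ⟨hji, mem_univ _⟩)).trans (hM i)

lemma Lh_mono (hM : DiagDominant M) {u w : E d → ℝ} {x : E d}
    (hax : ∀ i, secondDiff d h u x (e d i) ≤ secondDiff d h w x (e d i))
    (hdiag : ∀ i j, i < j →
      secondDiff d h u x (e d i + e d j) ≤ secondDiff d h w x (e d i + e d j) ∧
      secondDiff d h u x (e d i - e d j) ≤ secondDiff d h w x (e d i - e d j)) :
    Lh d h M u x ≤ Lh d h M w x := by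
  rw [Lh_eq_sum_secondDiff, Lh_eq_sum_secondDiff]
  refine add_le_add (sum_le_sum fun i _ =>
    mul_le_mul_of_nonneg_left (hax i) (sub_nonneg.mpr (hM i))) (sum_le_sum fun i _ =>
      sum_le_sum fun j hj => ?_)
  obtain ⟨hplus, hminus⟩ := hdiag i j (mem_filter.mp hj).2
  exact add_le_add (mul_le_mul_of_nonneg_left hplus (le_max_right _ _))
    (mul_le_mul_of_nonneg_left hminus (le_max_right _ _))

def stencilSum (d : ℕ) (h : ℝ) (v : E d → ℝ) (x : E d) : ℝ :=
  (∑ i, |secondDiff d h v x (e d i)|) +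
  ∑ i, ∑ j ∈ univ.filter (fun j => i < j),
    (|secondDiff d h v x (e d i + e d j)| + |secondDiff d h v x (e d i - e d j)|)

lemma abs_mul_le_of_nonneg_of_le {c L : ℝ} (hc : 0 ≤ c) (hcL : c ≤ L) (t : ℝ) :
    |c * t| ≤ L * |t| := by
  rw [abs_mul, abs_of_nonneg hc]
  exact mul_le_mul_of_nonneg_right hcL (abs_nonneg t)

lemma abs_Lh_le {Lam : ℝ} (hM : DiagDominant M) (hdiag : ∀ i, M i i ≤ Lam)
    (v : E d → ℝ) (x : E d) :
    |Lh d h M v x| ≤ Lam * stencilSum d h v x := by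
  have hoff : ∀ i j, i < j → |M i j| ≤ Lam := fun i j hij =>
    (hM.abs_le_diag (ne_of_gt hij)).trans (hdiag i)
  rw [Lh_eq_sum_secondDiff, stencilSum, mul_add, mul_sum, mul_sum]
  refine (abs_add_le _ _).trans (add_le_add ?_ ?_)
  · refine (abs_sum_le_sum_abs _ _).trans (sum_le_sum fun i _ => ?_)
    exact abs_mul_le_of_nonneg_of_le (sub_nonneg.mpr (hM i))
      ((sub_le_self _ (sum_nonneg fun _ _ => abs_nonneg _)).trans (hdiag i)) _
  · refine (abs_sum_le_sum_abs _ _).trans (sum_le_sum fun i _ => ?_)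
    rw [mul_sum]
    refine (abs_sum_le_sum_abs _ _).trans (sum_le_sum fun j hj => ?_)
    have hij := hoff i j (mem_filter.mp hj).2
    rw [mul_add]
    refine (abs_add_le _ _).trans (add_le_add ?_ ?_)
    · exact abs_mul_le_of_nonneg_of_le (le_max_right _ _)
        (max_le ((le_abs_self _).trans hij) ((abs_nonneg _).trans hij)) _
    · exact abs_mul_le_of_nonneg_of_le (le_max_right _ _)
        (max_le ((neg_le_abs _).trans hij) ((abs_nonneg _).trans hij)) _

end Lh

lemma IsaacsData.diag_le {d : ℕ} {ιA ιB : Type*} {lam Lam : ℝ}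
    {A : ιA → ιB → Matrix (Fin d) (Fin d) ℝ} (hA : IsaacsData d lam Lam A)
    (a : ιA) (b : ιB) (i : Fin d) : A a b i i ≤ Lam := by
  have := (hA a b).2.2.2.diag_nonneg (i := i)
  simpa [Matrix.sub_apply] using this

lemma ciSup_ciInf_mono {ι κ : Type*} [Nonempty κ] {φ ψ : ι → κ → ℝ} {m M : ℝ}
    (hφ : ∀ a b, m ≤ φ a b) (hψ : ∀ a b, ψ a b ≤ M) (h : ∀ a b, φ a b ≤ ψ a b) :
    ⨆ a, ⨅ b, φ a b ≤ ⨆ a, ⨅ b, ψ a b := by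
  have hφ_bdd : ∀ a, BddBelow (Set.range (φ a)) := fun a =>
    ⟨m, Set.forall_mem_range.mpr (hφ a)⟩
  have hψ_bdd : ∀ a, BddBelow (Set.range (ψ a)) := fun a =>
    ⟨m, Set.forall_mem_range.mpr fun b => (hφ a b).trans (h a b)⟩
  refine ciSup_mono ⟨M, Set.forall_mem_range.mpr fun a => ?_⟩ fun a =>
    ciInf_mono (hφ_bdd a) (h a)
  obtain ⟨b⟩ := ‹Nonempty κ›
  exact ciInf_le_of_le (hψ_bdd a) b (hψ a b)

lemma Fh_anti {d : ℕ} {ιA ιB : Type*} [Nonempty ιB] {lam Lam h : ℝ}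
    {A : ιA → ιB → Matrix (Fin d) (Fin d) ℝ} (hA : IsaacsData d lam Lam A)
    {u w : E d → ℝ} {x : E d} (hLh : ∀ a b, Lh d h (A a b) u x ≤ Lh d h (A a b) w x) :
    Fh d h A w x ≤ Fh d h A u x := by
  have hbound := fun v a b =>
    abs_le.mp (abs_Lh_le (h := h) (hA a b).2.1 (hA.diag_le a b) v x)
  exact ciSup_ciInf_mono (fun a b => neg_le_neg (hbound w a b).2)
    (fun a b => neg_le.mp (hbound u a b).1) fun a b => neg_le_neg (hLh a b)

section upwind

variable {d : ℕ} {h : ℝ}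

lemma upwindSq_nonneg (v : E d → ℝ) (x : E d) : 0 ≤ upwindSq d h v x :=
  mul_nonneg (by positivity) (sum_nonneg fun _ _ => sq_nonneg _)

lemma upwindSq_mono {u w : E d → ℝ} {x : E d}
    (hle : ∀ i, w x - w (x + h • e d i) ≤ u x - u (x + h • e d i) ∧
      w x - w (x - h • e d i) ≤ u x - u (x - h • e d i)) :
    upwindSq d h w x ≤ upwindSq d h u x := by
  refine mul_le_mul_of_nonneg_left (sum_le_sum fun i _ => ?_) (by positivity)
  exact pow_le_pow_left₀ (le_max_right _ _)
    (max_le_max (max_le_max (hle i).1 (hle i).2) le_rfl) 2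

end upwind

lemma div_rpow_le_div_rpow {f ε θ p q : ℝ} (hf : 0 ≤ f) (hε : 0 < ε) (hθ : 0 ≤ θ)
    (hp : 0 ≤ p) (hpq : p ≤ q) :
    f / (ε + q) ^ θ ≤ f / (ε + p) ^ θ :=
  div_le_div_of_nonneg_left hf (Real.rpow_pos_of_pos (by linarith) θ)
    (Real.rpow_le_rpow (by linarith) (by linarith) hθ)

section Grid

variable {d : ℕ} {h : ℝ} (G : Grid d h) {u w : E d → ℝ} {x : E d}

lemma secondDiff_le_of_max {S : Finset (E d)} (hmax : ∀ y ∈ S, u y - w y ≤ u x - w x)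
    {y : E d} (hp : x + h • y ∈ S) (hm : x - h • y ∈ S) :
    secondDiff d h u x y ≤ secondDiff d h w x y := by
  have := hmax _ hp
  have := hmax _ hm
  exact div_le_div_of_nonneg_right (by linarith) (sq_nonneg h)

lemma Grid.Lh_le_of_max (hx : x ∈ G.interior)
    (hmax : ∀ y ∈ G.interior ∪ G.boundary, u y - w y ≤ u x - w x)
    {M : Matrix (Fin d) (Fin d) ℝ} (hM : DiagDominant M) :
    Lh d h M u x ≤ Lh d h M w x :=
  Lh_mono hM
    (fun i => secondDiff_le_of_max hmax (G.stencil_ax x hx i).1 (G.stencil_ax x hx i).2)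
    fun i j hij =>
      have hs := G.stencil_diag x hx i j hij
      ⟨secondDiff_le_of_max hmax hs.1 hs.2.1, secondDiff_le_of_max hmax hs.2.2.1 hs.2.2.2⟩

lemma Grid.upwindSq_le_of_max (hx : x ∈ G.interior)
    (hmax : ∀ y ∈ G.interior ∪ G.boundary, u y - w y ≤ u x - w x) :
    upwindSq d h w x ≤ upwindSq d h u x :=
  upwindSq_mono fun i => by
    have := hmax _ (G.stencil_ax x hx i).1
    have := hmax _ (G.stencil_ax x hx i).2
    constructor <;> linarith

lemma Grid.mul_sub_le_scheme_sub {ιA ιB : Type*} [Nonempty ιB] {lam Lam ε θ : ℝ}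
    (hε : 0 < ε) (hθ : 0 ≤ θ) {A : ιA → ιB → Matrix (Fin d) (Fin d) ℝ}
    (hA : IsaacsData d lam Lam A) {f g : E d → ℝ} (hf : 0 ≤ f x) (hx : x ∈ G.interior)
    (hmax : ∀ y ∈ G.interior ∪ G.boundary, u y - w y ≤ u x - w x) :
    ε * (u x - w x) ≤ scheme d ε θ A G f g u x - scheme d ε θ A G f g w x := by
  have hF : Fh d h A w x ≤ Fh d h A u x :=
    Fh_anti hA fun a b => G.Lh_le_of_max hx hmax (hA a b).2.1
  have hdiv := div_rpow_le_div_rpow hf hε (by linarith : 0 ≤ θ / 2)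
    (upwindSq_nonneg w x) (G.upwindSq_le_of_max hx hmax)
  simp only [scheme, if_pos hx]
  linarith

end Grid

theorem discrete_comparison_general {d : ℕ} (lam Lam h ε θ : ℝ)
    (hε : 0 < ε) (hθ : 1 ≤ θ)
    {ιA ιB : Type*} [Nonempty ιB]
    (A : ιA → ιB → Matrix (Fin d) (Fin d) ℝ) (hA : IsaacsData d lam Lam A)
    (G : Grid d h) (f g : E d → ℝ) (hf : ∀ x ∈ G.interior, 0 ≤ f x)
    (u w : E d → ℝ)
    (hsub : ∀ x ∈ G.interior ∪ G.boundary, scheme d ε θ A G f g u x ≤ 0)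
    (hsup : ∀ x ∈ G.interior ∪ G.boundary, 0 ≤ scheme d ε θ A G f g w x) :
    ∀ x ∈ G.interior ∪ G.boundary, u x ≤ w x := by
  obtain ⟨x₀, hx₀, hmax⟩ :=
    (G.interior ∪ G.boundary).exists_max_image (fun y => u y - w y) G.nonempty
  have hu := hsub x₀ hx₀
  have hw := hsup x₀ hx₀
  suffices u x₀ ≤ w x₀ from fun x hx => by linarith [hmax x hx]
  by_cases hint : x₀ ∈ G.interior
  · have hmono :
        ε * (u x₀ - w x₀) ≤ scheme d ε θ A G f g u x₀ - scheme d ε θ A G f g w x₀ :=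
      G.mul_sub_le_scheme_sub hε (by linarith) hA (hf x₀ hint) hint hmax
    exact sub_nonpos.mp (nonpos_of_mul_nonpos_right (by linarith) hε)
  · simp only [scheme, if_neg hint] at hu hw
    linarith

/-- Discrete comparison principle: if `G_h(u, ·) ≤ 0 ≤ G_h(w, ·)`
on the whole grid, then `u ≤ w` on the grid. -/
theorem discrete_comparison {d : ℕ} (hd : 1 ≤ d) (lam Lam h ε θ : ℝ)
    (hlam : 0 < lam) (hlamLam : lam ≤ Lam) (hh : 0 < h) (hε : 0 < ε) (hθ : 1 ≤ θ)
    {ιA ιB : Type*} [Nonempty ιA] [Nonempty ιB]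
    (A : ιA → ιB → Matrix (Fin d) (Fin d) ℝ) (hA : IsaacsData d lam Lam A)
    (G : Grid d h) (f g : E d → ℝ) (hf : ∀ x ∈ G.interior, 0 ≤ f x)
    (u w : E d → ℝ)
    (hsub : ∀ x ∈ G.interior ∪ G.boundary, scheme d ε θ A G f g u x ≤ 0)
    (hsup : ∀ x ∈ G.interior ∪ G.boundary, 0 ≤ scheme d ε θ A G f g w x) :
    ∀ x ∈ G.interior ∪ G.boundary, u x ≤ w x :=
  discrete_comparison_general lam Lam h ε θ hε hθ A hA G f g hf u w hsub hsup

end Paper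
end
end
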